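/- Let K be a TOMKS in {0,1}^n, let {C₁,…,C_k} be a multi-cover for K, let α ∈ ℤ^n be its S-MCI coefficient vector, and set β := max_h α(C_h) − 1. Put T := max_{i∈{1,…,n}} α_i and for t = 1,…,T let L_t := {i ∈ C : α_i = t}; assume each L_t is nonempty and write i_{t,1} := min(L_t), i_{t,n_t} := max(L_t). Suppose: (1) C₀ = ∅; (2) every C_h is a minimal cover for K; and there exist h₁,…,h_T ∈ {1,…,k} such that (3) for each t = 2,…,T there exists j ∈ L_{t−1} with j ∉ C_{h_t}, such that i_{t,1} ∈ C_{h_t}, i_{1,n_1} ∈ C_{h_t}, and (C_{h_t} ∪ {j}) \ {i_{t,n_t}} is not a cover for K; (4) i_{1,1} ∈ C_{h_1} and for every i' ∈ {1,…,n} \ C, the set (C_{h_1} ∪ {i'}) \ {i_{1,1}} is not a cover for K; (5) α(C_{h_t}) = β + 1 for every t = 1,…,T. Then αᵀx ≤ β is a facet-defining inequality for the convex hull of K: it is valid for K, and there exist n affinely independent points x ∈ K (viewed in ℝ^n) satisfying αᵀx = β. -/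

import Mathlib

open Finset

/-- `S₁` dominates `S₂`: there is an injection `f : S₂ → S₁` with `f i ≤ i`. -/
def Dominates {n : ℕ} (S₁ S₂ : Finset (Fin n)) : Prop :=
  ∃ f : Fin n → Fin n, Set.InjOn f (S₂ : Set (Fin n)) ∧ ∀ i ∈ S₂, f i ∈ S₁ ∧ f i ≤ i

/-- Columns of `A` are componentwise non-increasing. -/
def ColsOrdered {m n : ℕ} (A : Fin m → Fin n → ℕ) : Prop :=
  ∀ j : Fin m, ∀ i i' : Fin n, i ≤ i' → A j i' ≤ A j i

/-- `S` is a cover for the multiple knapsack set given by `A, b`. -/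
def IsCover {m n : ℕ} (A : Fin m → Fin n → ℕ) (b : Fin m → ℕ) (S : Finset (Fin n)) : Prop :=
  ∃ j : Fin m, b j < ∑ i ∈ S, A j i

/-- Minimal cover: a cover none of whose proper subsets is a cover. -/
def IsMinimalCover {m n : ℕ} (A : Fin m → Fin n → ℕ) (b : Fin m → ℕ)
    (S : Finset (Fin n)) : Prop :=
  IsCover A b S ∧ ∀ S' ⊂ S, ¬ IsCover A b S'

/-- The union `C = ∪ₕ Cₕ`. -/
def unionC {n k : ℕ} (C : Fin k → Finset (Fin n)) : Finset (Fin n) :=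
  Finset.univ.sup C

/-- The intersection `C₀ = ∩ₕ Cₕ`. -/
def interC {n k : ℕ} (C : Fin k → Finset (Fin n)) : Finset (Fin n) :=
  Finset.univ.inf C

/-- `{C₁,…,C_k}` is a multi-cover for the TOMKS given by `A, b`. -/
def MultiCover {m n k : ℕ} (A : Fin m → Fin n → ℕ) (b : Fin m → ℕ)
    (C : Fin k → Finset (Fin n)) : Prop :=
  (∀ h, IsCover A b (C h)) ∧
  ∀ T ⊆ unionC C \ interC C, (∀ h, T ≠ C h \ interC C) →
    ∃ h, Dominates T (C h \ interC C) ∨ Dominates (C h \ interC C) T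

/-- Max of `g` over `S`, with the empty maximum taken to be `0`. -/
def fmax {ι : Type*} (S : Finset ι) (g : ι → ℤ) : ℤ :=
  if h : S.Nonempty then S.sup' h g else 0

/-- Min of `g` over `S`, with the empty minimum taken to be `0`. -/
def fmin {ι : Type*} (S : Finset ι) (g : ι → ℤ) : ℤ :=
  if h : S.Nonempty then S.inf' h g else 0

/-- `α` is an MCI coefficient vector for the family of covers `C`. -/
def IsMCICoeff {n k : ℕ} (C : Fin k → Finset (Fin n)) (α : Fin n → ℤ) : Prop :=
  (∀ i, i ∉ unionC C → α i = 0) ∧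
  (∀ i ∈ unionC C \ interC C, (∀ j ∈ unionC C \ interC C, j ≤ i) → α i = 1) ∧
  (∀ i ∈ unionC C \ interC C, (∃ j ∈ unionC C \ interC C, i < j) →
    ∀ h : Fin k, i ∈ C h →
      1 + fmax ((unionC C \ C h).filter (fun ℓ => i < ℓ)) α ≤ α i) ∧
  (∀ j ∈ interC C, ∃ h : Fin k,
    max (fmax ((unionC C \ C h).filter (fun ℓ => ℓ < j)) α)
        (1 + ∑ ℓ ∈ (unionC C \ C h).filter (fun ℓ => j < ℓ), α ℓ) ≤ α j)

/-- `α` is the S-MCI coefficient vector for the family of covers `C`. -/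
def IsSMCICoeff {n k : ℕ} (C : Fin k → Finset (Fin n)) (α : Fin n → ℤ) : Prop :=
  (∀ i, i ∉ unionC C → α i = 0) ∧
  (∀ i ∈ unionC C \ interC C,
    α i = 1 + fmax (Finset.univ.filter (fun h : Fin k => i ∈ C h))
        (fun h => fmax ((unionC C \ C h).filter (fun ℓ => i < ℓ)) α)) ∧
  (∀ j ∈ interC C,
    α j = fmin (Finset.univ : Finset (Fin k))
        (fun h => max (fmax ((unionC C \ C h).filter (fun ℓ => ℓ < j)) α)
            (1 + ∑ ℓ ∈ (unionC C \ C h).filter (fun ℓ => j < ℓ), α ℓ)))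

/-- Second-smallest value of the multiset `{α i : i ∈ D}` (for `|D| ≥ 2`). -/
def secondMin {n : ℕ} (α : Fin n → ℤ) (D : Finset (Fin n)) : ℤ :=
  fmax D (fun j => fmin (D.erase j) α)

/-- `πᵀ x ≤ 1` is a non-trivial facet-defining inequality for `conv(K)`. -/
def IsNontrivialFacet {m n : ℕ} (A : Fin m → Fin n → ℕ) (b : Fin m → ℕ)
    (pv : Fin n → ℝ) : Prop :=
  (∀ i, 0 ≤ pv i) ∧
  (∃ i j : Fin n, i ≠ j ∧ pv i ≠ 0 ∧ pv j ≠ 0) ∧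
  (∀ x : Fin n → ℝ, (∀ i, x i = 0 ∨ x i = 1) →
    (∀ j, ∑ i, (A j i : ℝ) * x i ≤ (b j : ℝ)) → ∑ i, pv i * x i ≤ 1) ∧
  (∃ pts : Fin n → (Fin n → ℝ), AffineIndependent ℝ pts ∧
    ∀ ℓ, (∀ i, pts ℓ i = 0 ∨ pts ℓ i = 1) ∧
      (∀ j, ∑ i, (A j i : ℝ) * pts ℓ i ≤ (b j : ℝ)) ∧
      ∑ i, pv i * pts ℓ i = 1)

/-- `S` is a cover for the single knapsack set given by `a, b`. -/
def IsCoverK {n : ℕ} (a : Fin n → ℕ) (b : ℕ) (S : Finset (Fin n)) : Prop :=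
  b < ∑ i ∈ S, a i

/-- Minimal cover for a single knapsack set. -/
def IsMinimalCoverK {n : ℕ} (a : Fin n → ℕ) (b : ℕ) (S : Finset (Fin n)) : Prop :=
  IsCoverK a b S ∧ ∀ S' ⊂ S, ¬ IsCoverK a b S'

-- ===================== auxiliary lemmas =====================

lemma le_fmax {ι : Type*} {S : Finset ι} {g : ι → ℤ} {a : ι} (ha : a ∈ S) : g a ≤ fmax S g := by
  rw [fmax, dif_pos ⟨a, ha⟩]
  exact Finset.le_sup' g ha

lemma mem_unionC {n k : ℕ} {C : Fin k → Finset (Fin n)} {i : Fin n} :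
    i ∈ unionC C ↔ ∃ h, i ∈ C h := by
  simp [unionC, Finset.mem_sup]

lemma subset_unionC {n k : ℕ} (C : Fin k → Finset (Fin n)) (h : Fin k) : C h ⊆ unionC C :=
  fun i hi => mem_unionC.2 ⟨h, hi⟩

/-- The S-MCI recursion (after the simplification `C₀ = ∅`). -/
def Hrec {n k : ℕ} (C : Fin k → Finset (Fin n)) (α : Fin n → ℤ) : Prop :=
  ∀ i ∈ unionC C,
    α i = 1 + fmax (Finset.univ.filter (fun h : Fin k => i ∈ C h))
        (fun h => fmax ((unionC C \ C h).filter (fun ℓ => i < ℓ)) α)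

lemma alpha_pos {n k : ℕ} {C : Fin k → Finset (Fin n)} {α : Fin n → ℤ}
    (hrec : Hrec C α) : ∀ i ∈ unionC C, 1 ≤ α i := by
  have key : ∀ d : ℕ, ∀ i : Fin n, n - i.val ≤ d → i ∈ unionC C → 1 ≤ α i := by
    intro d
    induction d with
    | zero => intro i hi _; omega
    | succ d ih =>
      intro i hd hiU
      rw [hrec i hiU]
      obtain ⟨h, hh⟩ := mem_unionC.1 hiU
      have hhF : h ∈ Finset.univ.filter (fun h : Fin k => i ∈ C h) := by
        simp [hh]
      have h0 : (0:ℤ) ≤ fmax ((unionC C \ C h).filter (fun ℓ => i < ℓ)) α := by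
        rw [fmax]
        split_ifs with hne
        · obtain ⟨ℓ, hℓ⟩ := hne
          have hℓU : ℓ ∈ unionC C := (Finset.mem_sdiff.1 (Finset.mem_filter.1 hℓ).1).1
          have hlt : i < ℓ := (Finset.mem_filter.1 hℓ).2
          have : 1 ≤ α ℓ := ih ℓ (by omega) hℓU
          calc (0:ℤ) ≤ α ℓ := by omega
            _ ≤ _ := Finset.le_sup' α hℓ
        · exact le_refl 0
      have h2 : (0:ℤ) ≤ fmax (Finset.univ.filter (fun h : Fin k => i ∈ C h))
          (fun h => fmax ((unionC C \ C h).filter (fun ℓ => i < ℓ)) α) :=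
        le_trans h0 (le_fmax hhF)
      omega
  intro i hi
  exact key n i (by omega) hi

lemma alpha_exchange {n k : ℕ} {C : Fin k → Finset (Fin n)} {α : Fin n → ℤ}
    (hrec : Hrec C α) {h : Fin k} {i ℓ : Fin n} (hi : i ∈ C h) (hℓU : ℓ ∈ unionC C)
    (hℓ : ℓ ∉ C h) (hlt : i < ℓ) : α ℓ + 1 ≤ α i := by
  have hiU : i ∈ unionC C := subset_unionC C h hi
  rw [hrec i hiU]
  have hhF : h ∈ Finset.univ.filter (fun h : Fin k => i ∈ C h) := by simp [hi]
  have hℓF : ℓ ∈ (unionC C \ C h).filter (fun ℓ => i < ℓ) := by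
    simp [Finset.mem_sdiff, hℓU, hℓ, hlt]
  have h1 : α ℓ ≤ fmax ((unionC C \ C h).filter (fun ℓ => i < ℓ)) α := le_fmax hℓF
  have h2 : fmax ((unionC C \ C h).filter (fun ℓ => i < ℓ)) α ≤
      fmax (Finset.univ.filter (fun h : Fin k => i ∈ C h))
        (fun h => fmax ((unionC C \ C h).filter (fun ℓ => i < ℓ)) α) := le_fmax hhF
  omega

lemma alpha_absorb {n k : ℕ} {C : Fin k → Finset (Fin n)} {α : Fin n → ℤ}
    (hrec : Hrec C α) {h : Fin k} {z i : Fin n} (hz : z ∈ C h) (hiU : i ∈ unionC C)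
    (hle : z ≤ i) (hα : α z ≤ α i) : i ∈ C h := by
  rcases eq_or_lt_of_le hle with rfl | hlt
  · exact hz
  · by_contra hnot
    have := alpha_exchange hrec hz hiU hnot hlt
    omega

lemma counting_of_dom {n : ℕ} {S₁ S₂ : Finset (Fin n)} (h : Dominates S₁ S₂) (x : Fin n) :
    (S₂.filter (· ≤ x)).card ≤ (S₁.filter (· ≤ x)).card := by
  obtain ⟨f, hinj, hf⟩ := h
  apply Finset.card_le_card_of_injOn f
  · intro i hi
    rw [Finset.mem_coe, Finset.mem_filter] at hi ⊢
    exact ⟨(hf i hi.1).1, le_trans (hf i hi.1).2 hi.2⟩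
  · exact fun a ha b hb hab =>
      hinj (Finset.mem_coe.2 (Finset.mem_filter.1 ha).1) (Finset.mem_coe.2 (Finset.mem_filter.1 hb).1) hab

lemma dom_of_counting {n : ℕ} : ∀ (T Ch : Finset (Fin n)),
    (∀ x, (T.filter (· ≤ x)).card ≤ (Ch.filter (· ≤ x)).card) → Dominates Ch T := by
  intro T
  induction T using Finset.strongInduction with
  | _ T ih =>
    intro Ch hcnt
    rcases T.eq_empty_or_nonempty with rfl | hTne
    · exact ⟨id, fun a ha => absurd ha (by simp), fun i hi => absurd hi (by simp)⟩
    · set t := T.max' hTne with ht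
      have htT : t ∈ T := T.max'_mem hTne
      have hChf : (Ch.filter (· ≤ t)).Nonempty := by
        rw [← Finset.card_pos]
        have h1 : 0 < (T.filter (· ≤ t)).card :=
          Finset.card_pos.2 ⟨t, Finset.mem_filter.2 ⟨htT, le_refl t⟩⟩
        exact lt_of_lt_of_le h1 (hcnt t)
      set c := (Ch.filter (· ≤ t)).max' hChf with hc
      have hcmem := (Ch.filter (· ≤ t)).max'_mem hChf
      have hcCh : c ∈ Ch := (Finset.mem_filter.1 hcmem).1
      have hct : c ≤ t := (Finset.mem_filter.1 hcmem).2
      have hgap : ∀ y ∈ Ch, y ≤ t → y ≤ c := fun y hy hyt =>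
        (Ch.filter (· ≤ t)).le_max' y (Finset.mem_filter.2 ⟨hy, hyt⟩)
      have hsub : T.erase t ⊂ T := Finset.erase_ssubset htT
      have hcnt' : ∀ x, ((T.erase t).filter (· ≤ x)).card ≤ ((Ch.erase c).filter (· ≤ x)).card := by
        intro x
        have eT : (T.erase t).filter (· ≤ x) = (T.filter (· ≤ x)).erase t := by
          ext y; simp only [Finset.mem_filter, Finset.mem_erase]; tauto
        have eC : (Ch.erase c).filter (· ≤ x) = (Ch.filter (· ≤ x)).erase c := by
          ext y; simp only [Finset.mem_filter, Finset.mem_erase]; tauto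
        rw [eT, eC]
        by_cases hxc : c ≤ x
        · have hcin : c ∈ Ch.filter (· ≤ x) := Finset.mem_filter.2 ⟨hcCh, hxc⟩
          rw [Finset.card_erase_of_mem hcin]
          by_cases hxt : t ≤ x
          · have htin : t ∈ T.filter (· ≤ x) := Finset.mem_filter.2 ⟨htT, hxt⟩
            rw [Finset.card_erase_of_mem htin]
            have := hcnt x
            omega
          · push_neg at hxt
            rw [Finset.erase_eq_of_notMem (by simp only [Finset.mem_filter, not_and, not_le]; exact fun _ => hxt)]
            have e2 : Ch.filter (· ≤ x) = Ch.filter (· ≤ t) := by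
              ext y
              simp only [Finset.mem_filter]
              constructor
              · rintro ⟨hy, hyx⟩; exact ⟨hy, le_trans hyx (le_of_lt hxt)⟩
              · rintro ⟨hy, hyt⟩; exact ⟨hy, by
                  have := hgap y hy hyt
                  exact le_trans this hxc⟩
            have e3 : (T.filter (· ≤ x)).card ≤ ((T.filter (· ≤ t)).erase t).card := by
              apply Finset.card_le_card
              intro y hy
              rcases Finset.mem_filter.1 hy with ⟨hyT, hyx⟩
              rw [Finset.mem_erase, Finset.mem_filter]
              exact ⟨by rintro rfl; exact absurd hyx hxt.not_ge, hyT, le_trans hyx (le_of_lt hxt)⟩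
            have e4 : ((T.filter (· ≤ t)).erase t).card = (T.filter (· ≤ t)).card - 1 :=
              Finset.card_erase_of_mem (Finset.mem_filter.2 ⟨htT, le_refl t⟩)
            have := hcnt t
            rw [e2]
            omega
        · push_neg at hxc
          have hxt : x < t := lt_of_lt_of_le hxc hct
          rw [Finset.erase_eq_of_notMem (by simp only [Finset.mem_filter, not_and, not_le]; exact fun _ => hxt),
              Finset.erase_eq_of_notMem (by simp only [Finset.mem_filter, not_and, not_le]; exact fun _ => hxc)]
          exact hcnt x
      obtain ⟨f, hinj, hf⟩ := ih (T.erase t) hsub (Ch.erase c) hcnt'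
      refine ⟨Function.update f t c, ?_, ?_⟩
      · intro a ha b hb hab
        rw [Finset.mem_coe] at ha hb
        rcases eq_or_ne a t with rfl | hat <;> rcases eq_or_ne b t with rfl | hbt
        · rfl
        · rw [Function.update_self, Function.update_of_ne hbt] at hab
          have := (hf b (Finset.mem_erase.2 ⟨hbt, hb⟩)).1
          rw [← hab] at this
          exact absurd (Finset.mem_erase.1 this).1 (by simp)
        · rw [Function.update_self, Function.update_of_ne hat] at hab
          have := (hf a (Finset.mem_erase.2 ⟨hat, ha⟩)).1
          rw [hab] at this
          exact absurd (Finset.mem_erase.1 this).1 (by simp)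
        · rw [Function.update_of_ne hat, Function.update_of_ne hbt] at hab
          exact hinj (Finset.mem_coe.2 (Finset.mem_erase.2 ⟨hat, ha⟩))
            (Finset.mem_coe.2 (Finset.mem_erase.2 ⟨hbt, hb⟩)) hab
      · intro i hi
        rcases eq_or_ne i t with rfl | hit
        · rw [Function.update_self]; exact ⟨hcCh, hct⟩
        · rw [Function.update_of_ne hit]
          have := hf i (Finset.mem_erase.2 ⟨hit, hi⟩)
          exact ⟨Finset.mem_of_mem_erase this.1, this.2⟩

lemma key_dom {n k : ℕ} {C : Fin k → Finset (Fin n)} {α : Fin n → ℤ}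
    (hrec : Hrec C α) (h : Fin k) {T : Finset (Fin n)}
    (hTU : T ⊆ unionC C) (hdom : Dominates (C h) T) (hne : T ≠ C h) :
    (∑ i ∈ T, α i) + 1 ≤ ∑ i ∈ C h, α i := by
  set Ch := C h with hCh
  have hcnt := counting_of_dom hdom
  have hcnt2 : ∀ x, ((T \ Ch).filter (· ≤ x)).card ≤ ((Ch \ T).filter (· ≤ x)).card := by
    intro x
    have e1 : (T \ Ch).filter (· ≤ x) = (T.filter (· ≤ x)) \ (Ch.filter (· ≤ x)) := by
      ext y; simp only [Finset.mem_filter, Finset.mem_sdiff]; tauto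
    have e2 : (Ch \ T).filter (· ≤ x) = (Ch.filter (· ≤ x)) \ (T.filter (· ≤ x)) := by
      ext y; simp only [Finset.mem_filter, Finset.mem_sdiff]; tauto
    rw [e1, e2]
    have i1 := Finset.card_sdiff_add_card_inter (T.filter (· ≤ x)) (Ch.filter (· ≤ x))
    have i2 := Finset.card_sdiff_add_card_inter (Ch.filter (· ≤ x)) (T.filter (· ≤ x))
    have i3 : ((T.filter (· ≤ x)) ∩ (Ch.filter (· ≤ x))).card
        = ((Ch.filter (· ≤ x)) ∩ (T.filter (· ≤ x))).card := by
      rw [Finset.inter_comm]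
    have := hcnt x
    omega
  obtain ⟨ψ, hinj, hψ⟩ := dom_of_counting (T \ Ch) (Ch \ T) hcnt2
  set I := (T \ Ch).image ψ with hI
  have himg : I ⊆ Ch \ T := by
    intro y hy
    obtain ⟨i, hi, rfl⟩ := Finset.mem_image.1 hy
    exact (hψ i hi).1
  have E4a : ∑ y ∈ I, α y = ∑ i ∈ T \ Ch, α (ψ i) :=
    Finset.sum_image (fun x hx y hy hxy => hinj (Finset.mem_coe.2 hx) (Finset.mem_coe.2 hy) hxy)
  have E4b : ∑ i ∈ T \ Ch, (α i + 1) ≤ ∑ i ∈ T \ Ch, α (ψ i) := by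
    apply Finset.sum_le_sum
    intro i hi
    have hiT : i ∈ T := (Finset.mem_sdiff.1 hi).1
    have hiC : i ∉ Ch := (Finset.mem_sdiff.1 hi).2
    have hψi := hψ i hi
    have hψCh : ψ i ∈ Ch := (Finset.mem_sdiff.1 hψi.1).1
    have hlt : ψ i < i := lt_of_le_of_ne hψi.2 (fun e => hiC (e ▸ hψCh))
    exact alpha_exchange hrec hψCh (hTU hiT) hiC hlt
  have E4 : ∑ i ∈ T \ Ch, α i + ((T \ Ch).card : ℤ) ≤ ∑ y ∈ I, α y := by
    rw [E4a]
    calc ∑ i ∈ T \ Ch, α i + ((T \ Ch).card : ℤ)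
        = ∑ i ∈ T \ Ch, (α i + 1) := by rw [Finset.sum_add_distrib, Finset.sum_const,
          nsmul_eq_mul, mul_one]
      _ ≤ _ := E4b
  have E5 : (((Ch \ T) \ I).card : ℤ) ≤ ∑ y ∈ (Ch \ T) \ I, α y := by
    have : ∀ y ∈ (Ch \ T) \ I, 1 ≤ α y := by
      intro y hy
      have : y ∈ Ch := (Finset.mem_sdiff.1 (Finset.mem_sdiff.1 hy).1).1
      exact alpha_pos hrec y (subset_unionC C h this)
    calc (((Ch \ T) \ I).card : ℤ) = ((Ch \ T) \ I).card • (1:ℤ) := by simp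
      _ ≤ ∑ y ∈ (Ch \ T) \ I, α y := Finset.card_nsmul_le_sum _ _ _ this
  have E3 : ∑ y ∈ (Ch \ T) \ I, α y + ∑ y ∈ I, α y = ∑ y ∈ Ch \ T, α y :=
    Finset.sum_sdiff himg
  have E1 : ∑ i ∈ T ∩ Ch, α i + ∑ i ∈ T \ Ch, α i = ∑ i ∈ T, α i :=
    Finset.sum_inter_add_sum_sdiff T Ch α
  have E2 : ∑ i ∈ Ch ∩ T, α i + ∑ i ∈ Ch \ T, α i = ∑ i ∈ Ch, α i :=
    Finset.sum_inter_add_sum_sdiff Ch T α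
  have E6 : ∑ i ∈ T ∩ Ch, α i = ∑ i ∈ Ch ∩ T, α i := by rw [Finset.inter_comm]
  have hcards : 1 ≤ ((T \ Ch).card : ℤ) + (((Ch \ T) \ I).card : ℤ) := by
    rcases Nat.eq_zero_or_pos (T \ Ch).card with hz | hp
    · have hTsub : T ⊆ Ch := by
        rw [← Finset.sdiff_eq_empty_iff_subset]
        exact Finset.card_eq_zero.1 hz
      have hIe : I = ∅ := by
        rw [hI, Finset.card_eq_zero.1 hz, Finset.image_empty]
      have hne2 : (Ch \ T).Nonempty := by
        rw [Finset.sdiff_nonempty]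
        intro hsub
        exact hne (Finset.Subset.antisymm hTsub hsub)
      have : 0 < ((Ch \ T) \ I).card := by
        rw [hIe, Finset.sdiff_empty]
        exact Finset.card_pos.2 hne2
      omega
    · omega
  linarith

lemma noncover_subset {m n : ℕ} {A : Fin m → Fin n → ℕ} {b : Fin m → ℕ}
    {S S' : Finset (Fin n)} (hsub : S' ⊆ S) (hS : ¬ IsCover A b S) : ¬ IsCover A b S' := by
  intro ⟨j, hj⟩
  exact hS ⟨j, lt_of_lt_of_le hj (Finset.sum_le_sum_of_subset hsub)⟩

lemma dom_sum_le {m n : ℕ} {A : Fin m → Fin n → ℕ} (hA : ColsOrdered A)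
    {S₁ S₂ : Finset (Fin n)} (h : Dominates S₁ S₂) (j : Fin m) :
    ∑ i ∈ S₂, A j i ≤ ∑ i ∈ S₁, A j i := by
  obtain ⟨f, hinj, hf⟩ := h
  calc ∑ i ∈ S₂, A j i ≤ ∑ i ∈ S₂, A j (f i) :=
        Finset.sum_le_sum (fun i hi => hA j (f i) i (hf i hi).2)
    _ = ∑ y ∈ S₂.image f, A j y :=
        (Finset.sum_image (fun x hx y hy hxy => hinj (Finset.mem_coe.2 hx) (Finset.mem_coe.2 hy) hxy)).symm
    _ ≤ ∑ i ∈ S₁, A j i := Finset.sum_le_sum_of_subset (by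
        intro y hy
        obtain ⟨i, hi, rfl⟩ := Finset.mem_image.1 hy
        exact (hf i hi).1)

lemma noncover_erase_le {m n : ℕ} {A : Fin m → Fin n → ℕ} {b : Fin m → ℕ}
    (hA : ColsOrdered A) {S : Finset (Fin n)} {r x : Fin n}
    (hnc : ¬ IsCover A b (S.erase r)) (hr : r ∈ S) (hx : x ∈ S) (hxr : x ≤ r) :
    ¬ IsCover A b (S.erase x) := by
  intro ⟨j, hj⟩
  apply hnc
  refine ⟨j, lt_of_lt_of_le hj ?_⟩
  have e1 : ∑ i ∈ S.erase x, A j i + A j x = ∑ i ∈ S, A j i := Finset.sum_erase_add S _ hx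
  have e2 : ∑ i ∈ S.erase r, A j i + A j r = ∑ i ∈ S, A j i := Finset.sum_erase_add S _ hr
  have := hA j x r hxr
  omega

lemma valid_sets {m n k : ℕ} {A : Fin m → Fin n → ℕ} {b : Fin m → ℕ}
    (hA : ColsOrdered A) {C : Fin k → Finset (Fin n)} (hmc : MultiCover A b C)
    (h1 : interC C = ∅) {α : Fin n → ℤ} (hzero : ∀ i, i ∉ unionC C → α i = 0)
    (hrec : Hrec C α) {β : ℤ} (hβmax : ∀ h, ∑ i ∈ C h, α i ≤ β + 1) :
    ∀ S : Finset (Fin n), ¬ IsCover A b S → ∑ i ∈ S, α i ≤ β := by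
  intro S hS
  set T := S ∩ unionC C with hT
  have hsum : ∑ i ∈ S, α i = ∑ i ∈ T, α i := by
    have h0 := Finset.sum_inter_add_sum_sdiff S (unionC C) α
    rw [← hT] at h0
    have hz : ∑ i ∈ S \ unionC C, α i = 0 :=
      Finset.sum_eq_zero (fun i hi => hzero i (Finset.mem_sdiff.1 hi).2)
    omega
  have hTS : T ⊆ S := Finset.inter_subset_left
  have hTU : T ⊆ unionC C := Finset.inter_subset_right
  have hTne : ∀ h, T ≠ C h := by
    intro h hTC
    have hsub : C h ⊆ S := hTC ▸ hTS
    exact noncover_subset hsub hS (hmc.1 h)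
  obtain ⟨h, hd⟩ := hmc.2 T (by rw [h1, Finset.sdiff_empty]; exact hTU)
    (by intro h; rw [h1, Finset.sdiff_empty]; exact hTne h)
  rw [h1, Finset.sdiff_empty] at hd
  rcases hd with hd | hd
  · exfalso
    obtain ⟨j, hj⟩ := hmc.1 h
    have h2 := dom_sum_le hA hd j
    have h3 : ∑ i ∈ T, A j i ≤ ∑ i ∈ S, A j i := Finset.sum_le_sum_of_subset hTS
    exact hS ⟨j, by omega⟩
  · have := key_dom hrec h hTU hd (hTne h)
    have := hβmax h
    omega

-- indicator vectors and basis vectors over ℝ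
def chiv {n : ℕ} (S : Finset (Fin n)) : Fin n → ℝ := fun i => if i ∈ S then 1 else 0
def evv {n : ℕ} (x : Fin n) : Fin n → ℝ := fun i => if i = x then 1 else 0

lemma chiv_erase_sub {n : ℕ} (S : Finset (Fin n)) {x y : Fin n} (hx : x ∈ S) (hy : y ∈ S) :
    chiv (S.erase y) - chiv (S.erase x) = evv x - evv y := by
  rcases eq_or_ne x y with rfl | hxy
  · simp
  · funext i
    simp only [Pi.sub_apply, chiv, evv, Finset.mem_erase]
    by_cases hix : i = x <;> by_cases hiy : i = y <;> simp_all

lemma chiv_insert_erase_sub {n : ℕ} (S : Finset (Fin n)) {x y : Fin n}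
    (hy : y ∉ S) (hx : x ∈ S) :
    chiv ((insert y S).erase x) - chiv (S.erase x) = evv y := by
  have hyx : y ≠ x := fun e => hy (e ▸ hx)
  funext i
  simp only [Pi.sub_apply, chiv, evv, Finset.mem_erase, Finset.mem_insert]
  by_cases hiy : i = y <;> by_cases hix : i = x <;> simp_all

lemma chiv_three {n : ℕ} (S : Finset (Fin n)) {a c y : Fin n} (ha : a ∈ S) (hc : c ∈ S)
    (hy : y ∉ S) (hac : a ≠ c) :
    chiv (S.erase a) - chiv ((insert y S).erase c) = evv c - evv a - evv y := by
  have hya : y ≠ a := fun e => hy (e ▸ ha)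
  have hyc : y ≠ c := fun e => hy (e ▸ hc)
  funext i
  simp only [Pi.sub_apply, chiv, evv, Finset.mem_erase, Finset.mem_insert]
  by_cases hia : i = a <;> by_cases hic : i = c <;> by_cases hiy : i = y <;> simp_all

lemma sum_mul_chiv {n : ℕ} (g : Fin n → ℝ) (S : Finset (Fin n)) :
    ∑ i, g i * chiv S i = ∑ i ∈ S, g i := by
  simp only [chiv, mul_ite, mul_one, mul_zero]
  rw [Finset.sum_ite_mem, Finset.univ_inter]

lemma eq_sum_evv {n : ℕ} (v : Fin n → ℝ) : v = ∑ i, v i • evv i := by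
  funext j
  rw [Finset.sum_apply]
  simp only [Pi.smul_apply, evv, smul_eq_mul, mul_ite, mul_one, mul_zero]
  rw [Finset.sum_ite_eq Finset.univ j v]
  simp

/-- sufficient conditions for the S-MCI `αᵀx ≤ β` to be facet-defining
for `conv(K)`: it is valid for `K` and there exist `n` affinely independent points of `K`
satisfying it with equality. -/
theorem smci_facet {m n k : ℕ} (hk : 0 < k)
    (A : Fin m → Fin n → ℕ) (b : Fin m → ℕ) (hA : ColsOrdered A)
    (C : Fin k → Finset (Fin n)) (hmc : MultiCover A b C)
    (α : Fin n → ℤ) (hα : IsSMCICoeff C α)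
    (β : ℤ) (hβ : β = fmax (Finset.univ : Finset (Fin k)) (fun h => ∑ i ∈ C h, α i) - 1)
    (Tm : ℤ) (hTm : Tm = fmax (Finset.univ : Finset (Fin n)) α)
    (L : ℤ → Finset (Fin n)) (hL : ∀ t : ℤ, L t = (unionC C).filter (fun i => α i = t))
    (hLne : ∀ t : ℤ, 1 ≤ t → t ≤ Tm → (L t).Nonempty)
    (h1 : interC C = ∅)
    (h2 : ∀ h : Fin k, IsMinimalCover A b (C h))
    (hsel : ℤ → Fin k)
    (h3 : ∀ t : ℤ, 2 ≤ t → t ≤ Tm →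
      ∃ j ∈ L (t - 1), j ∉ C (hsel t) ∧
        (∃ imin ∈ L t, (∀ x ∈ L t, imin ≤ x) ∧ imin ∈ C (hsel t)) ∧
        (∃ m1 ∈ L 1, (∀ x ∈ L 1, x ≤ m1) ∧ m1 ∈ C (hsel t)) ∧
        (∃ imax ∈ L t, (∀ x ∈ L t, x ≤ imax) ∧
          ¬ IsCover A b ((insert j (C (hsel t))).erase imax)))
    (h4 : ∃ imin ∈ L 1, (∀ x ∈ L 1, imin ≤ x) ∧ imin ∈ C (hsel 1) ∧
      ∀ i' : Fin n, i' ∉ unionC C →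
        ¬ IsCover A b ((insert i' (C (hsel 1))).erase imin))
    (h5 : ∀ t : ℤ, 1 ≤ t → t ≤ Tm → ∑ i ∈ C (hsel t), α i = β + 1) :
    (∀ x : Fin n → ℤ, (∀ i, x i = 0 ∨ x i = 1) →
      (∀ j, ∑ i, (A j i : ℤ) * x i ≤ (b j : ℤ)) → ∑ i, α i * x i ≤ β) ∧
    (∃ pts : Fin n → (Fin n → ℝ), AffineIndependent ℝ pts ∧
      ∀ ℓ : Fin n, (∀ i, pts ℓ i = 0 ∨ pts ℓ i = 1) ∧
        (∀ j, ∑ i, (A j i : ℝ) * pts ℓ i ≤ (b j : ℝ)) ∧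
        ∑ i, (α i : ℝ) * pts ℓ i = (β : ℝ)) := by
  
  classical
  have hzero := hα.1
  have hrec : Hrec C α := by
    intro i hi
    exact hα.2.1 i (by rw [h1, Finset.sdiff_empty]; exact hi)
  have hpos := alpha_pos hrec
  have hβmax : ∀ h, ∑ i ∈ C h, α i ≤ β + 1 := by
    intro h
    have h0 : (∑ i ∈ C h, α i) ≤ fmax (Finset.univ : Finset (Fin k))
        (fun h => ∑ i ∈ C h, α i) :=
      le_fmax (g := fun h => ∑ i ∈ C h, α i) (Finset.mem_univ h)
    rw [hβ]
    omega
  constructor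
  · -- validity
    intro x hx01 hxA
    set S := Finset.univ.filter (fun i => x i = 1) with hS
    have hsum : ∑ i, α i * x i = ∑ i ∈ S, α i := by
      rw [hS, ← Finset.sum_filter_add_sum_filter_not Finset.univ (fun i => x i = 1)
        (fun i => α i * x i)]
      have e1 : ∑ i ∈ Finset.univ.filter (fun i => x i = 1), α i * x i
          = ∑ i ∈ Finset.univ.filter (fun i => x i = 1), α i := by
        apply Finset.sum_congr rfl
        intro i hi
        rw [(Finset.mem_filter.1 hi).2, mul_one]
      have e2 : ∑ i ∈ Finset.univ.filter (fun i => ¬ x i = 1), α i * x i = 0 := by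
        apply Finset.sum_eq_zero
        intro i hi
        rcases hx01 i with h0 | hone
        · rw [h0, mul_zero]
        · exact absurd hone (Finset.mem_filter.1 hi).2
      rw [e1, e2, add_zero]
    have hnc : ¬ IsCover A b S := by
      rintro ⟨j, hj⟩
      have hxj := hxA j
      have e : ∑ i, (A j i : ℤ) * x i = ∑ i ∈ S, (A j i : ℤ) := by
        rw [hS, ← Finset.sum_filter_add_sum_filter_not Finset.univ (fun i => x i = 1)
          (fun i => (A j i : ℤ) * x i)]
        have e1 : ∑ i ∈ Finset.univ.filter (fun i => x i = 1), (A j i:ℤ) * x i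
            = ∑ i ∈ Finset.univ.filter (fun i => x i = 1), (A j i:ℤ) := by
          apply Finset.sum_congr rfl
          intro i hi
          rw [(Finset.mem_filter.1 hi).2, mul_one]
        have e2 : ∑ i ∈ Finset.univ.filter (fun i => ¬ x i = 1), (A j i:ℤ) * x i = 0 := by
          apply Finset.sum_eq_zero
          intro i hi
          rcases hx01 i with h0 | hone
          · rw [h0, mul_zero]
          · exact absurd hone (Finset.mem_filter.1 hi).2
        rw [e1, e2, add_zero]
      have hcast : ((b j : ℤ)) < ∑ i ∈ S, (A j i : ℤ) := by
        have : ((∑ i ∈ S, A j i : ℕ) : ℤ) = ∑ i ∈ S, (A j i : ℤ) := by push_cast; ring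
        omega
      rw [e] at hxj
      omega
    rw [hsum]
    exact valid_sets hA hmc h1 hzero hrec hβmax S hnc
  · -- facet points
    obtain ⟨mn1, hmn1L, hmn1min, hmn1C, hout⟩ := h4
    have hLmem : ∀ (τ : ℤ) (i : Fin n), i ∈ L τ ↔ i ∈ unionC C ∧ α i = τ := by
      intro τ i
      rw [hL τ]
      exact Finset.mem_filter
    obtain ⟨hmn1U, hαmn1⟩ := (hLmem 1 mn1).1 hmn1L
    have hnpos : 0 < n := mn1.pos
    have hTm1 : 1 ≤ Tm := by
      have h1' : α mn1 ≤ fmax (Finset.univ : Finset (Fin n)) α :=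
        le_fmax (g := α) (Finset.mem_univ mn1)
      rw [hTm]
      omega
    have hαle : ∀ i, i ∈ unionC C → α i ≤ Tm := by
      intro i _
      rw [hTm]
      exact le_fmax (g := α) (Finset.mem_univ i)
    have habs1 : ∀ i, i ∈ unionC C → α i = 1 → i ∈ C (hsel 1) := by
      intro i hiU hαi
      exact alpha_absorb hrec hmn1C hiU (hmn1min i ((hLmem 1 i).2 ⟨hiU, hαi⟩)) (by omega)
    have h3' : ∀ s : ℕ, ∃ j m1 mx : Fin n, (2 ≤ s → (s:ℤ) ≤ Tm →
        j ∈ unionC C ∧ α j = (s:ℤ) - 1 ∧ j ∉ C (hsel (s:ℤ)) ∧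
        m1 ∈ unionC C ∧ α m1 = 1 ∧ m1 ∈ C (hsel (s:ℤ)) ∧
        mx ∈ unionC C ∧ α mx = (s:ℤ) ∧ (∀ x ∈ unionC C, α x = (s:ℤ) → x ≤ mx) ∧
        mx ∈ C (hsel (s:ℤ)) ∧
        (∀ i ∈ unionC C, α i = (s:ℤ) → i ∈ C (hsel (s:ℤ))) ∧
        ¬ IsCover A b ((insert j (C (hsel (s:ℤ)))).erase mx)) := by
      intro s
      by_cases hs : 2 ≤ s ∧ (s:ℤ) ≤ Tm
      · obtain ⟨j, hjL, hjC, ⟨mnt, hmntL, hmntmin, hmntC⟩, ⟨m1, hm1L, hm1max, hm1C⟩,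
          ⟨mx, hmxL, hmxmax, hmxNC⟩⟩ := h3 (s:ℤ) (by exact_mod_cast hs.1) hs.2
        obtain ⟨hjU, hαj⟩ := (hLmem _ j).1 hjL
        obtain ⟨hm1U, hαm1⟩ := (hLmem 1 m1).1 hm1L
        obtain ⟨hmxU, hαmx⟩ := (hLmem _ mx).1 hmxL
        obtain ⟨hmntU, hαmnt⟩ := (hLmem _ mnt).1 hmntL
        have habs : ∀ i ∈ unionC C, α i = (s:ℤ) → i ∈ C (hsel (s:ℤ)) := by
          intro i hiU hαi
          exact alpha_absorb hrec hmntC hiU (hmntmin i ((hLmem _ i).2 ⟨hiU, hαi⟩)) (by omega)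
        exact ⟨j, m1, mx, fun _ _ => ⟨hjU, hαj, hjC, hm1U, hαm1, hm1C, hmxU, hαmx,
          (fun x hxU hαx => hmxmax x ((hLmem _ x).2 ⟨hxU, hαx⟩)), habs mx hmxU hαmx,
          habs, hmxNC⟩⟩
      · exact ⟨mn1, mn1, mn1, fun ha hb => absurd ⟨ha, hb⟩ hs⟩
    choose jf m1f mxf hdat using h3'
    set Pts : Set (Fin n → ℝ) := {x | (∀ i, x i = 0 ∨ x i = 1) ∧
      (∀ j, ∑ i, (A j i : ℝ) * x i ≤ (b j : ℝ)) ∧ ∑ i, (α i : ℝ) * x i = (β:ℝ)} with hPts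
    have hgood : ∀ S : Finset (Fin n), ¬ IsCover A b S → (∑ i ∈ S, α i) = β →
        chiv S ∈ Pts := by
      intro S hnc hts
      rw [hPts, Set.mem_setOf_eq]
      refine ⟨fun i => ?_, fun j => ?_, ?_⟩
      · by_cases hi : i ∈ S <;> simp [chiv, hi]
      · rw [sum_mul_chiv]
        have hle : ∑ i ∈ S, A j i ≤ b j := by
          by_contra hlt
          push_neg at hlt
          exact hnc ⟨j, hlt⟩
        calc ∑ i ∈ S, (A j i:ℝ) = ((∑ i ∈ S, A j i : ℕ) : ℝ) := by push_cast; ring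
          _ ≤ (b j : ℝ) := by exact_mod_cast hle
      · rw [sum_mul_chiv]
        calc ∑ i ∈ S, (α i : ℝ) = ((∑ i ∈ S, α i : ℤ) : ℝ) := by push_cast; ring
          _ = (β:ℝ) := by rw [hts]
    have hCh1sum : ∑ i ∈ C (hsel 1), α i = β + 1 := h5 1 (le_refl 1) hTm1
    have hB1nc : ¬ IsCover A b ((C (hsel 1)).erase mn1) :=
      (h2 (hsel 1)).2 _ (Finset.erase_ssubset hmn1C)
    have hB1mem : chiv ((C (hsel 1)).erase mn1) ∈ Pts := by
      apply hgood _ hB1nc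
      have := Finset.sum_erase_add (C (hsel 1)) α hmn1C
      omega
    set V := vectorSpan ℝ Pts with hV
    have hgen0 : ∀ i', i' ∉ unionC C → evv i' ∈ V := by
      intro i' hi'
      have hi'C : i' ∉ C (hsel 1) := fun hin => hi' (subset_unionC C _ hin)
      have hQmem : chiv ((insert i' (C (hsel 1))).erase mn1) ∈ Pts := by
        apply hgood _ (hout i' hi')
        have e1 : ∑ i ∈ insert i' (C (hsel 1)), α i = α i' + ∑ i ∈ C (hsel 1), α i :=
          Finset.sum_insert hi'C
        have e2 := Finset.sum_erase_add (insert i' (C (hsel 1))) α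
          (Finset.mem_insert_of_mem hmn1C)
        have e3 : α i' = 0 := hzero i' hi'
        omega
      have hd := vsub_mem_vectorSpan ℝ hQmem hB1mem
      rw [vsub_eq_sub, chiv_insert_erase_sub _ hi'C hmn1C] at hd
      exact hd
    have hP1mem : ∀ i, i ∈ unionC C → α i = 1 → chiv ((C (hsel 1)).erase i) ∈ Pts := by
      intro i hiU hαi
      have hiC := habs1 i hiU hαi
      apply hgood _ ((h2 (hsel 1)).2 _ (Finset.erase_ssubset hiC))
      have := Finset.sum_erase_add (C (hsel 1)) α hiC
      omega
    have hgen1 : ∀ i, i ∈ unionC C → α i = 1 → evv i - evv mn1 ∈ V := by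
      intro i hiU hαi
      have hd := vsub_mem_vectorSpan ℝ hB1mem (hP1mem i hiU hαi)
      rw [vsub_eq_sub, chiv_erase_sub _ (habs1 i hiU hαi) hmn1C] at hd
      exact hd
    have hXmem : ∀ s : ℕ, 2 ≤ s → (s:ℤ) ≤ Tm → ∀ i, i ∈ unionC C → α i = (s:ℤ) →
        chiv ((insert (jf s) (C (hsel (s:ℤ)))).erase i) ∈ Pts := by
      intro s hs2 hsT i hiU hαi
      obtain ⟨hjU, hαj, hjC, hm1U, hαm1, hm1C, hmxU, hαmx, hmxmax, hmxC, habs, hNC⟩ :=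
        hdat s hs2 hsT
      have hiC : i ∈ C (hsel (s:ℤ)) := habs i hiU hαi
      have hnc : ¬ IsCover A b ((insert (jf s) (C (hsel (s:ℤ)))).erase i) :=
        noncover_erase_le hA hNC (Finset.mem_insert_of_mem hmxC)
          (Finset.mem_insert_of_mem hiC) (hmxmax i hiU hαi)
      apply hgood _ hnc
      have e1 : ∑ x ∈ insert (jf s) (C (hsel (s:ℤ))), α x
          = α (jf s) + ∑ x ∈ C (hsel (s:ℤ)), α x := Finset.sum_insert hjC
      have e2 := Finset.sum_erase_add (insert (jf s) (C (hsel (s:ℤ)))) α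
        (Finset.mem_insert_of_mem hiC)
      have e5 : ∑ x ∈ C (hsel (s:ℤ)), α x = β + 1 := h5 (s:ℤ) (by omega) hsT
      omega
    have hgens : ∀ s : ℕ, 2 ≤ s → (s:ℤ) ≤ Tm → ∀ i, i ∈ unionC C → α i = (s:ℤ) →
        evv i - evv (mxf s) ∈ V := by
      intro s hs2 hsT i hiU hαi
      obtain ⟨hjU, hαj, hjC, hm1U, hαm1, hm1C, hmxU, hαmx, hmxmax, hmxC, habs, hNC⟩ :=
        hdat s hs2 hsT
      have hd := vsub_mem_vectorSpan ℝ (hXmem s hs2 hsT (mxf s) hmxU hαmx)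
        (hXmem s hs2 hsT i hiU hαi)
      rw [vsub_eq_sub, chiv_erase_sub _ (Finset.mem_insert_of_mem (habs i hiU hαi))
        (Finset.mem_insert_of_mem hmxC)] at hd
      exact hd
    have hgend : ∀ s : ℕ, 2 ≤ s → (s:ℤ) ≤ Tm →
        evv (mxf s) - evv (m1f s) - evv (jf s) ∈ V := by
      intro s hs2 hsT
      obtain ⟨hjU, hαj, hjC, hm1U, hαm1, hm1C, hmxU, hαmx, hmxmax, hmxC, habs, hNC⟩ :=
        hdat s hs2 hsT
      have hRmem : chiv ((C (hsel (s:ℤ))).erase (m1f s)) ∈ Pts := by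
        apply hgood _ ((h2 (hsel (s:ℤ))).2 _ (Finset.erase_ssubset hm1C))
        have := Finset.sum_erase_add (C (hsel (s:ℤ))) α hm1C
        have e5 : ∑ x ∈ C (hsel (s:ℤ)), α x = β + 1 := h5 (s:ℤ) (by omega) hsT
        omega
      have hBmem := hXmem s hs2 hsT (mxf s) hmxU hαmx
      have hd := vsub_mem_vectorSpan ℝ hRmem hBmem
      rw [vsub_eq_sub, chiv_three _ hm1C hmxC hjC (fun e => by rw [e] at hαm1; omega)] at hd
      exact hd
    have hchain : ∀ s : ℕ, 1 ≤ s → (s:ℤ) ≤ Tm →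
        evv (if s = 1 then mn1 else mxf s) - (s:ℝ) • evv mn1 ∈ V := by
      intro s
      induction s with
      | zero => intro hcon _; omega
      | succ s ih =>
        intro _ hsT
        rcases Nat.eq_zero_or_pos s with rfl | hs1
        · have heq : evv mn1 - ((0+1:ℕ):ℝ) • evv mn1 = 0 := by push_cast; module
          rw [if_pos rfl, heq]
          exact V.zero_mem
        · have hs2 : 2 ≤ s + 1 := by omega
          have hsne : ¬ (s + 1 = 1) := by omega
          obtain ⟨hjU, hαj, hjC, hm1U, hαm1, hm1C, hmxU, hαmx, hmxmax, hmxC, habs, hNC⟩ :=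
            hdat (s+1) hs2 hsT
          have ha := hgend (s+1) hs2 hsT
          have hb := hgen1 (m1f (s+1)) hm1U hαm1
          have hsT' : (s:ℤ) ≤ Tm := by push_cast at hsT ⊢; omega
          have hc : evv (jf (s+1)) - evv (if s = 1 then mn1 else mxf s) ∈ V := by
            rcases eq_or_ne s 1 with rfl | hsne1
            · rw [if_pos rfl]
              exact hgen1 _ hjU (by omega)
            · rw [if_neg hsne1]
              exact hgens s (by omega) hsT' _ hjU (by omega)
          have hd := ih (by omega) hsT'
          have hsum := V.add_mem (V.add_mem (V.add_mem ha hb) hc) hd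
          have heq : evv (mxf (s+1)) - ((s+1:ℕ):ℝ) • evv mn1 =
              (((evv (mxf (s+1)) - evv (m1f (s+1)) - evv (jf (s+1)))
                + (evv (m1f (s+1)) - evv mn1))
                + (evv (jf (s+1)) - evv (if s = 1 then mn1 else mxf s)))
                + (evv (if s = 1 then mn1 else mxf s) - (s:ℝ) • evv mn1) := by
            push_cast
            module
          rw [if_neg hsne, heq]
          exact hsum
    have hwi : ∀ i : Fin n, evv i - ((α i : ℤ) : ℝ) • evv mn1 ∈ V := by
      intro i
      by_cases hiU : i ∈ unionC C
      · have h1le := hpos i hiU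
        have hle := hαle i hiU
        set s : ℕ := (α i).toNat with hsdef
        have hsi : (s:ℤ) = α i := Int.toNat_of_nonneg (by omega)
        have hs1 : 1 ≤ s := by omega
        have hsT : (s:ℤ) ≤ Tm := by omega
        have hup : evv i - evv (if s = 1 then mn1 else mxf s) ∈ V := by
          rcases eq_or_ne s 1 with hs | hs
          · rw [hs, if_pos rfl]
            exact hgen1 i hiU (by omega)
          · rw [if_neg hs]
            exact hgens s (by omega) hsT i hiU (by omega)
        have hch := hchain s hs1 hsT
        have hsir : ((α i : ℤ):ℝ) = (s:ℝ) := by exact_mod_cast congrArg Int.cast hsi.symm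
        have heq : evv i - ((α i:ℤ):ℝ) • evv mn1 =
            (evv i - evv (if s = 1 then mn1 else mxf s))
            + (evv (if s = 1 then mn1 else mxf s) - (s:ℝ) • evv mn1) := by
          rw [hsir]
          module
        rw [heq]
        exact V.add_mem hup hch
      · have hz : α i = 0 := hzero i hiU
        rw [hz]
        simpa using hgen0 i hiU
    have hkerV : ∀ v : Fin n → ℝ, (∑ i, ((α i:ℤ) : ℝ) * v i) = 0 → v ∈ V := by
      intro v hv
      have e2 : ∑ i, v i • (evv i - ((α i:ℤ):ℝ) • evv mn1)
          = (∑ i, v i • evv i) - (∑ i, v i * ((α i:ℤ):ℝ)) • evv mn1 := by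
        simp only [smul_sub]
        rw [Finset.sum_sub_distrib, Finset.sum_smul]
        congr 1
        apply Finset.sum_congr rfl
        intro i _
        rw [smul_smul]
      have e3 : ∑ i, v i * ((α i:ℤ):ℝ) = 0 := by
        rw [← hv]
        apply Finset.sum_congr rfl
        intro i _
        ring
      have e4 : v = ∑ i, v i • (evv i - ((α i:ℤ):ℝ) • evv mn1) := by
        rw [e2, e3, zero_smul, sub_zero, ← eq_sum_evv]
      rw [e4]
      exact Submodule.sum_mem _ (fun i _ => Submodule.smul_mem _ _ (hwi i))
    set φ : (Fin n → ℝ) →ₗ[ℝ] ℝ := ∑ i, ((α i : ℤ):ℝ) • LinearMap.proj i with hφdef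
    have hφ : ∀ x : Fin n → ℝ, φ x = ∑ i, ((α i:ℤ):ℝ) * x i := by
      intro x
      rw [hφdef, LinearMap.sum_apply]
      apply Finset.sum_congr rfl
      intro i _
      rw [LinearMap.smul_apply, LinearMap.proj_apply, smul_eq_mul]
    have hVW : V = LinearMap.ker φ := by
      apply le_antisymm
      · rw [hV, vectorSpan_def]
        apply Submodule.span_le.2
        rintro w hw
        obtain ⟨p, hp, q, hq, rfl⟩ := Set.mem_vsub.1 hw
        rw [SetLike.mem_coe, LinearMap.mem_ker, vsub_eq_sub, map_sub, hφ p, hφ q]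
        rw [hPts, Set.mem_setOf_eq] at hp hq
        rw [hp.2.2, hq.2.2, sub_self]
      · intro v hv
        exact hkerV v (by rw [← hφ v]; exact LinearMap.mem_ker.1 hv)
    have hφe : φ (evv mn1) = 1 := by
      rw [hφ]
      simp only [evv, mul_ite, mul_one, mul_zero]
      rw [Finset.sum_ite_eq' Finset.univ mn1 (fun i => ((α i:ℤ):ℝ))]
      simp [hαmn1]
    have hker_rank : Module.finrank ℝ (LinearMap.ker φ) = n - 1 := by
      have hsur : Function.Surjective φ := by
        intro c
        refine ⟨c • evv mn1, ?_⟩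
        rw [map_smul, hφe, smul_eq_mul, mul_one]
      have hrn := LinearMap.finrank_range_add_finrank_ker φ
      rw [LinearMap.range_eq_top.2 hsur, finrank_top, Module.finrank_self,
        Module.finrank_pi, Fintype.card_fin] at hrn
      omega
    obtain ⟨t, hts, hspan, hai⟩ := exists_affineIndependent ℝ (Fin n → ℝ) Pts
    have hPtsfin : Pts.Finite := by
      apply Set.Finite.subset (Set.Finite.pi (fun _ : Fin n => (Set.finite_singleton (0:ℝ)).insert 1))
      intro x hx
      rw [Set.mem_univ_pi]
      intro i
      rw [hPts, Set.mem_setOf_eq] at hx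
      rcases hx.1 i with h | h <;> simp [h]
    have htfin : t.Finite := hPtsfin.subset hts
    haveI : Fintype ↥t := htfin.fintype
    have htne : t.Nonempty := by
      rcases Set.eq_empty_or_nonempty t with rfl | h
      · exfalso
        have hBin : chiv ((C (hsel 1)).erase mn1) ∈ affineSpan ℝ Pts :=
          subset_affineSpan ℝ Pts hB1mem
        rw [← hspan, AffineSubspace.span_empty] at hBin
        exact AffineSubspace.notMem_bot ℝ (Fin n → ℝ) _ hBin
      · exact h
    have hWt : vectorSpan ℝ t = LinearMap.ker φ := by
      rw [← direction_affineSpan, hspan, direction_affineSpan, ← hV, hVW]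
    have hcard : Fintype.card ↥t = n := by
      haveI : Nonempty ↥t := htne.to_subtype
      have h2' := hai.finrank_vectorSpan (n := Fintype.card ↥t - 1)
        (Nat.succ_pred_eq_of_pos Fintype.card_pos).symm
      rw [Subtype.range_coe] at h2'
      rw [hWt, hker_rank] at h2'
      have hp2 : 0 < Fintype.card ↥t := Fintype.card_pos
      omega
    have e := (Fintype.equivFinOfCardEq hcard).symm
    refine ⟨fun ℓ => ((e ℓ : ↥t) : Fin n → ℝ), hai.comp_embedding e.toEmbedding, ?_⟩
    intro ℓ
    have hmem : ((e ℓ : ↥t) : Fin n → ℝ) ∈ Pts := hts (e ℓ).2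
    rw [hPts, Set.mem_setOf_eq] at hmem
    exact ⟨hmem.1, hmem.2.1, hmem.2.2⟩
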